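/- For all integers 0 ≤ i ≤ d, the linear form Ψ satisfies Ψ(qbase(i,x,d)_q) = (-1)^{d-i} q^{-C(d-i,2)} / ([d+1]_q · qbinom(d,i)_q). -/

import Mathlib

open Polynomial Finset

noncomputable section

/-- The field ℚ(q) of rational functions. -/
abbrev K : Type := RatFunc ℚ

/-- The variable q of ℚ(q). -/
def qq : K := RatFunc.X

/-- The q-integer [n]_t = (t^n - 1)/(t - 1), for n ∈ ℤ. -/
def qint (t : K) (n : ℤ) : K := (t ^ n - 1) / (t - 1)

/-- The q-factorial [n]!_t. -/
def qfact (t : K) (n : ℕ) : K := ∏ i ∈ range n, qint t (i + 1)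

/-- The generalized q-binomial qbinom(m, n)_t = [m]_t [m-1]_t ⋯ [m-n+1]_t / [n]!_t. -/
def qbinom (t : K) (m : ℤ) (n : ℕ) : K := (∏ i ∈ range n, qint t (m - i)) / qfact t n

/-- The q-binomial with the vanishing convention: 0 unless 0 ≤ n ≤ m. -/
def qbinomv (t : K) (m n : ℤ) : K :=
  if 0 ≤ n ∧ n ≤ m then (∏ i ∈ range n.toNat, qint t (m - i)) / qfact t n.toNat else 0

/-- The polynomial [n, x]_t = [n]_t + t^n x. -/
def qb (t : K) (n : ℤ) : Polynomial K := C (qint t n) + C (t ^ n) * X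

/-- The polynomial qbase(m, x, n)_t = [m-n+1,x]_t ⋯ [m,x]_t / [n]!_t. -/
def qbase (t : K) (m : ℤ) (n : ℕ) : Polynomial K :=
  (∏ i ∈ range n, qb t (m - n + 1 + i)) * C (qfact t n)⁻¹

/-- The linear form V: essentially (1/q) times the derivative at x = [-1]_q = -1/q. -/
def qV (E : Polynomial K) : K := (Polynomial.derivative E).eval (-qq⁻¹) / qq

/-- The defining property of the q-summation operator Σ:
(ΣE)([n]_q) = Σ_{j=0}^n q^j E([j]_q) for all n ≥ 0. -/
def IsQSigma (S : Polynomial K →ₗ[K] Polynomial K) : Prop :=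
  ∀ E : Polynomial K, ∀ n : ℕ,
    (S E).eval (qint qq n) = ∑ j ∈ range (n + 1), qq ^ j * E.eval (qint qq j)

/-! The polynomial `qbase(m, x, n)` takes the value `qbinom(m + j, n)` at `x = [j]`, so by the
q-hockey-stick identity `Σ qbase(i, ·, d)` and `q^(d-i) qbase(i+1, ·, d+1)` agree at every `[n]`,
hence everywhere. The product `qbase(i+1, x, d+1)` contains the factor `[1, x]`, which vanishes at
`x = [-1]` with derivative `q`; so `V` just evaluates the remaining factors at `[-1]`, which gives
`[-1]⋯[-(d-i)] · [i]! / [d+1]!`, and `[-j] = -q^(-j) [j]` produces the sign and the power of `q`. -/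

section General

variable {t : K}

lemma qint_zero (t : K) : qint t 0 = 0 := by
  simp [qint]

lemma qint_one (ht₁ : t ≠ 1) : qint t 1 = 1 := by
  simp [qint, sub_ne_zero.mpr ht₁]

lemma qint_add (ht₀ : t ≠ 0) (a b : ℤ) : qint t (a + b) = qint t a + t ^ a * qint t b := by
  rw [qint, qint, qint, zpow_add₀ ht₀, mul_div_assoc', ← add_div]
  ring_nf

lemma qint_neg (ht₀ : t ≠ 0) (n : ℤ) : qint t (-n) = -(t ^ (-n) * qint t n) := by
  have h := qint_add ht₀ (-n) n
  rw [neg_add_cancel, qint_zero] at h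
  linear_combination -h

lemma qint_neg_one (ht₀ : t ≠ 0) (ht₁ : t ≠ 1) : qint t (-1) = -t⁻¹ := by
  rw [qint_neg ht₀, qint_one ht₁, zpow_neg_one, mul_one]

lemma qfact_succ (t : K) (n : ℕ) : qfact t (n + 1) = qfact t n * qint t (n + 1) := by
  rw [qfact, qfact, prod_range_succ]

lemma qb_eval_qint (ht₀ : t ≠ 0) (n j : ℤ) : (qb t n).eval (qint t j) = qint t (n + j) := by
  simp [qb, qint_add ht₀]

lemma qbase_eval_qint (ht₀ : t ≠ 0) (m : ℤ) (n : ℕ) (j : ℤ) :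
    (qbase t m n).eval (qint t j) = qbinom t (m + j) n := by
  rw [qbase, eval_mul, eval_prod, eval_C, qbinom, div_eq_mul_inv,
    ← prod_range_reflect (fun k => qint t (m + j - k)) n]
  congr 1
  refine prod_congr rfl fun k hk => ?_
  rw [qb_eval_qint ht₀]
  congr 1
  have : ((n - 1 - k : ℕ) : ℤ) = n - 1 - k := by have := mem_range.mp hk; omega
  rw [this]
  ring

lemma qbinom_natCast_of_lt (t : K) {m n : ℕ} (h : m < n) : qbinom t m n = 0 := by
  rw [qbinom, prod_eq_zero (mem_range.mpr h) (by simp [qint_zero]), zero_div]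

lemma prod_range_qint_sub_self (ht₀ : t ≠ 0) (n : ℕ) :
    ∏ k ∈ range n, qint t (k - n) = (-1) ^ n * t ^ (-((n + 1).choose 2 : ℤ)) * qfact t n := by
  induction n with
  | zero => simp [qfact]
  | succ n ih =>
    rw [prod_range_succ']
    simp only [Nat.cast_add, Nat.cast_one, Nat.cast_zero, add_sub_add_right_eq_sub, zero_sub]
    have hexp : t ^ (-((n + 1 + (n + 1).choose 2 : ℕ) : ℤ))
        = t ^ (-((n + 1).choose 2 : ℤ)) * t ^ (-((n : ℤ) + 1)) := by
      rw [← zpow_add₀ ht₀]; push_cast; ring_nf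
    rw [ih, qint_neg ht₀, qfact_succ, Nat.choose_succ_succ' (n + 1), Nat.choose_one_right, hexp]
    ring

lemma prod_range_qint_sub_mul_qfact (t : K) (i n : ℕ) :
    (∏ k ∈ range i, qint t ((i + n : ℕ) - k)) * qfact t n = qfact t (i + n) := by
  induction i with
  | zero => simp
  | succ i ih =>
    rw [prod_range_succ', add_right_comm, qfact_succ, ← ih]
    push_cast
    ring_nf

end General

lemma qq_ne_zero : qq ≠ 0 := RatFunc.X_ne_zero

lemma qq_pow_injective : Function.Injective (qq ^ · : ℕ → K) := by
  intro a b h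
  have hX : (X : ℚ[X]) ^ a = X ^ b :=
    RatFunc.algebraMap_injective ℚ (by simpa [qq, RatFunc.algebraMap_X] using h)
  simpa using congrArg natDegree hX

lemma qq_ne_one : qq ≠ 1 := fun h => absurd (@qq_pow_injective 1 0 (by simp [h])) one_ne_zero

lemma qint_qq_natCast_injective : Function.Injective (fun n : ℕ => qint qq n) := by
  intro a b h
  have hsub : qq - 1 ≠ 0 := sub_ne_zero.mpr qq_ne_one
  simp only [qint, zpow_natCast, div_left_inj' hsub, sub_left_inj] at h
  exact qq_pow_injective h

lemma qint_qq_natCast_ne_zero {n : ℕ} (hn : n ≠ 0) : qint qq n ≠ 0 := fun h =>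
  hn (qint_qq_natCast_injective (h.trans (by simp [qint_zero])))

lemma qfact_qq_ne_zero (n : ℕ) : qfact qq n ≠ 0 :=
  prod_ne_zero_iff.mpr fun k _ => by exact_mod_cast qint_qq_natCast_ne_zero k.succ_ne_zero

lemma qbinom_mul_qfact_mul_qfact (i n : ℕ) :
    qbinom qq (i + n : ℕ) i * qfact qq i * qfact qq n = qfact qq (i + n) := by
  rw [qbinom, div_mul_cancel₀ _ (qfact_qq_ne_zero i), prod_range_qint_sub_mul_qfact]

lemma qbinom_qq_succ_succ (m : ℤ) (d : ℕ) :
    qbinom qq (m + 1) (d + 1) = qbinom qq m (d + 1) + qq ^ (m - d) * qbinom qq m d := by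
  have hd : qint qq (d + 1) ≠ 0 := by exact_mod_cast qint_qq_natCast_ne_zero d.succ_ne_zero
  have hpascal : qint qq (m + 1) = qint qq (m - d) + qq ^ (m - d) * qint qq (d + 1) := by
    rw [← qint_add qq_ne_zero]; ring_nf
  have hnum : ∏ k ∈ range (d + 1), qint qq (m + 1 - k)
      = qint qq (m + 1) * ∏ k ∈ range d, qint qq (m - k) := by
    rw [prod_range_succ']
    push_cast
    ring_nf
  rw [qbinom, qbinom, qbinom, hnum, prod_range_succ, qfact_succ, hpascal]
  field_simp [qfact_qq_ne_zero d]

lemma sum_qq_pow_mul_qbinom (i n m : ℕ) :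
    ∑ j ∈ range (m + 1), qq ^ j * qbinom qq (i + j) (i + n)
      = qq ^ n * qbinom qq (i + m + 1) (i + n + 1) := by
  induction m with
  | zero =>
    have h := qbinom_qq_succ_succ i (i + n)
    rw [qbinom_natCast_of_lt qq (by omega), zero_add] at h
    simp only [zero_add, sum_range_one, pow_zero, one_mul, Nat.cast_zero, add_zero]
    rw [h, ← mul_assoc, ← zpow_natCast, ← zpow_add₀ qq_ne_zero,
      show (n : ℤ) + (i - (i + n : ℕ)) = 0 by push_cast; ring, zpow_zero, one_mul]
  | succ m ih =>
    rw [sum_range_succ, ih, Nat.cast_succ, ← add_assoc, qbinom_qq_succ_succ (i + m + 1), mul_add,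
      ← mul_assoc, ← zpow_natCast qq n, ← zpow_add₀ qq_ne_zero,
      show (n : ℤ) + (i + m + 1 - (i + n : ℕ)) = (m + 1 : ℕ) by push_cast; ring,
      zpow_natCast qq (m + 1)]

lemma IsQSigma.apply_qbase {S : Polynomial K →ₗ[K] Polynomial K} (hS : IsQSigma S) (i n : ℕ) :
    S (qbase qq i (i + n)) = C (qq ^ n) * qbase qq (i + 1) (i + n + 1) := by
  refine eq_of_infinite_eval_eq _ _
    (Set.infinite_of_injective_forall_mem qint_qq_natCast_injective fun m => ?_)
  simp only [Set.mem_ofPred_eq, hS _ m, qbase_eval_qint qq_ne_zero, sum_qq_pow_mul_qbinom,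
    eval_mul, eval_C]
  ring_nf

lemma qV_C_mul (c : K) (E : Polynomial K) : qV (C c * E) = c * qV E := by
  rw [qV, qV, derivative_C_mul, eval_mul, eval_C, mul_div_assoc]

lemma qV_mul_qb_one (p : Polynomial K) : qV (p * qb qq 1) = p.eval (qint qq (-1)) := by
  have hroot : (qb qq 1).eval (qint qq (-1)) = 0 := by
    rw [qb_eval_qint qq_ne_zero, add_neg_cancel, qint_zero]
  rw [qV, ← qint_neg_one qq_ne_zero qq_ne_one, derivative_mul, eval_add, eval_mul, eval_mul, hroot]
  simp [qb, qq_ne_zero]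

lemma qV_qbase (i n : ℕ) :
    qV (qbase qq (i + 1) (i + n + 1))
      = (∏ k ∈ range n, qint qq (k - n)) * qfact qq i / qfact qq (i + n + 1) := by
  have hsplit : qbase qq (i + 1) (i + n + 1) = (C (qfact qq (i + n + 1))⁻¹ *
      (∏ k ∈ range n, qb qq (k + 1 - n)) * ∏ k ∈ range i, qb qq (k + 2)) * qb qq 1 := by
    rw [qbase, show i + n + 1 = n + 1 + i by ring, prod_range_add, prod_range_succ]
    push_cast
    ring_nf
  rw [hsplit, qV_mul_qb_one]
  simp only [eval_mul, eval_C, eval_prod, qb_eval_qint qq_ne_zero]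
  have hleft : ∏ k ∈ range n, qint qq (k + 1 - n + -1) = ∏ k ∈ range n, qint qq (k - n) :=
    prod_congr rfl fun k _ => by ring_nf
  have hright : ∏ k ∈ range i, qint qq (k + 2 + -1) = qfact qq i :=
    prod_congr rfl fun k _ => by ring_nf
  rw [hleft, hright, div_eq_mul_inv]
  ring

theorem psi_qbase (S : Polynomial K →ₗ[K] Polynomial K) (hS : IsQSigma S)
    (i d : ℕ) (hid : i ≤ d) :
    qV (S (qbase qq i d)) =
      (-1) ^ (d - i) * qq ^ (-((d - i).choose 2 : ℤ)) / (qint qq (d + 1) * qbinom qq d i) := by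
  obtain ⟨n, rfl⟩ := Nat.exists_eq_add_of_le hid
  have hpow : qq ^ n * qq ^ (-((n + 1).choose 2 : ℤ)) = qq ^ (-(n.choose 2 : ℤ)) := by
    rw [← zpow_natCast, ← zpow_add₀ qq_ne_zero, Nat.choose_succ_succ', Nat.choose_one_right]
    push_cast
    ring_nf
  rw [Nat.add_sub_cancel_left, hS.apply_qbase, qV_C_mul, qV_qbase,
    prod_range_qint_sub_self qq_ne_zero, qfact_succ, ← qbinom_mul_qfact_mul_qfact, ← hpow]
  field_simp [qfact_qq_ne_zero]

end
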